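/- Let 𝒮 be a compact metric space and P a Markov transition kernel on 𝒮 with the strong Feller property. Assume P is topologically irreducible: for every s ∈ 𝒮 and every nonempty open set O ⊆ 𝒮 there exists an integer n ≥ 1 with P^n(s, O) > 0, where P^n denotes the n-step kernel. Then any two invariant probability measures for P coincide. -/

import Mathlib

/-!
Let `μ₁ ≠ μ₂` be invariant probability measures and let `A` be a Hahn set for `μ₁ - μ₂`. The
positive part `ρ₁ = (μ₁ - μ₂)|_A` and the negative part `ρ₂ = (μ₂ - μ₁)|_{Aᶜ}` are nonzero
invariant measures, concentrated on `A` and on `Aᶜ`. Invariance then forces `P(s, Aᶜ) = 0` for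
`ρ₁`-a.e. `s` and `P(s, A) = 0` for `ρ₂`-a.e. `s`. By the strong Feller property the sets where
`P(·, Aᶜ) ≠ 0` and `P(·, A) ≠ 0` are open, and an invariant measure of an irreducible kernel
charges every nonempty open set. Hence both are empty, contradicting `P(s, A) + P(s, Aᶜ) = 1`.
-/

open MeasureTheory Set

/-- The `n`-step kernel of a Markov transition kernel `P`: `kernelIter P 0 s = δ_s` and
`kernelIter P (n+1) s B = ∫ kernelIter P n s' B dP(s, ds')`, so that `kernelIter P 1 = P`
and `kernelIter P (n+1)(s, B) = ∫ (kernelIter P n)(s', B) P(s, ds')`. -/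
noncomputable def kernelIter {S : Type*} [MeasurableSpace S]
    (P : S → Measure S) : ℕ → S → Measure S
  | 0 => fun s => Measure.dirac s
  | n + 1 => fun s => (P s).bind (kernelIter P n)

section

variable {S : Type*} [MeasurableSpace S] {P : S → Measure S}

def IsStrongFeller [TopologicalSpace S] (P : S → Measure S) : Prop :=
  ∀ f : S → ℝ, Measurable f → (∃ M, ∀ x, |f x| ≤ M) → Continuous fun s => ∫ x, f x ∂(P s)

def IsTopologicallyIrreducible [TopologicalSpace S] (P : S → Measure S) : Prop :=
  ∀ s : S, ∀ O : Set S, IsOpen O → O.Nonempty → ∃ n : ℕ, 1 ≤ n ∧ 0 < kernelIter P n s O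

lemma measurable_kernelIter (hP : Measurable P) : ∀ n, Measurable (kernelIter P n)
  | 0 => Measure.measurable_dirac
  | n + 1 => (Measure.measurable_bind' (measurable_kernelIter hP n)).comp hP

lemma bind_kernelIter_eq_self (hP : Measurable P) {μ : Measure S} (hμ : μ.bind P = μ) :
    ∀ n, μ.bind (kernelIter P n) = μ
  | 0 => Measure.bind_dirac
  | n + 1 => by
    have hQ : AEMeasurable (kernelIter P n) (μ.bind P) := (measurable_kernelIter hP n).aemeasurable
    rw [kernelIter, ← Measure.bind_bind hP.aemeasurable hQ, hμ, bind_kernelIter_eq_self hP hμ n]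

lemma bind_eq_self_of_forall_eq_lintegral (hP : Measurable P) {μ : Measure S}
    (hμ : ∀ A : Set S, MeasurableSet A → μ A = ∫⁻ s, P s A ∂μ) : μ.bind P = μ :=
  Measure.ext fun A hA => (Measure.bind_apply hA hP.aemeasurable).trans (hμ A hA).symm

lemma MeasureTheory.Measure.bind_add (hP : Measurable P) (μ ν : Measure S) :
    (μ + ν).bind P = μ.bind P + ν.bind P :=
  Measure.comp_add (κ := ⟨P, hP⟩)

lemma MeasureTheory.Measure.bind_apply_univ (hP : Measurable P) [∀ s, IsProbabilityMeasure (P s)]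
    (μ : Measure S) :
    μ.bind P univ = μ univ := by
  simp [Measure.bind_apply MeasurableSet.univ hP.aemeasurable]

lemma bind_eq_self_of_le_bind (hP : Measurable P) [∀ s, IsProbabilityMeasure (P s)]
    {ρ : Measure S} [IsFiniteMeasure ρ] (h : ρ ≤ ρ.bind P) : ρ.bind P = ρ :=
  (Measure.eq_of_le_of_measure_univ_eq h (Measure.bind_apply_univ hP ρ).symm).symm

lemma ae_eq_zero_of_bind_eq_self (hP : Measurable P) {ρ : Measure S} (hρ : ρ.bind P = ρ)
    {B : Set S} (hB : MeasurableSet B) (hB0 : ρ B = 0) : ∀ᵐ s ∂ρ, P s B = 0 := by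
  refine (lintegral_eq_zero_iff (f := fun s => P s B) ((Measure.measurable_coe hB).comp hP)).1 ?_
  rw [← Measure.bind_apply hB hP.aemeasurable, hρ, hB0]

lemma measure_ne_zero_of_bind_eq_self (hP : Measurable P) {μ : Measure S} (hμ : μ.bind P = μ)
    (hμ0 : μ ≠ 0) {O : Set S} (hO : MeasurableSet O) (hreach : ∀ s, ∃ n, kernelIter P n s O ≠ 0) :
    μ O ≠ 0 := by
  intro hO0
  have hnull : ∀ n, ∀ᵐ s ∂μ, kernelIter P n s O = 0 := fun n =>
    ae_eq_zero_of_bind_eq_self (measurable_kernelIter hP n) (bind_kernelIter_eq_self hP hμ n) hO hO0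
  have : ∀ᵐ _ ∂μ, False := (ae_all_iff.2 hnull).mono fun s hs =>
    let ⟨n, hn⟩ := hreach s; hn (hs n)
  exact hμ0 (ae_eq_bot.1 (Filter.eventually_false_iff_eq_bot.1 this))

lemma restrict_le_restrict_of_forall_subset {μ ν : Measure S} {A : Set S} (hA : MeasurableSet A)
    (h : ∀ t, MeasurableSet t → t ⊆ A → ν t ≤ μ t) : ν.restrict A ≤ μ.restrict A :=
  Measure.le_iff.2 fun t ht => by
    rw [Measure.restrict_apply ht, Measure.restrict_apply ht]
    exact h _ (ht.inter hA) inter_subset_right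

lemma restrict_sub_restrict_apply_of_disjoint (μ ν : Measure S) {A B : Set S}
    (hA : MeasurableSet A) (hAB : Disjoint A B) : (μ.restrict A - ν.restrict A) B = 0 := by
  refine nonpos_iff_eq_zero.1 ((Measure.sub_le (ν := ν.restrict A) B).trans_eq ?_)
  rw [Measure.restrict_apply_eq_zero' hA, hAB.symm.inter_eq, measure_empty]

section Hahn

variable {μ ν : Measure S} [IsFiniteMeasure μ] [IsFiniteMeasure ν] {A : Set S}
  (hA : MeasurableSet A) (hνμ : ν.restrict A ≤ μ.restrict A) (hμν : μ.restrict Aᶜ ≤ ν.restrict Aᶜ)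
include hA hνμ hμν

lemma add_restrict_compl_sub_eq :
    μ + (ν.restrict Aᶜ - μ.restrict Aᶜ) = (μ.restrict A - ν.restrict A) + ν := by
  have hpos := Measure.sub_add_cancel_of_le hνμ
  have hneg := Measure.sub_add_cancel_of_le hμν
  calc μ + (ν.restrict Aᶜ - μ.restrict Aᶜ)
      = μ.restrict A + ((ν.restrict Aᶜ - μ.restrict Aᶜ) + μ.restrict Aᶜ) := by
        rw [add_comm _ (μ.restrict Aᶜ), ← add_assoc, Measure.restrict_add_restrict_compl hA]
    _ = (μ.restrict A - ν.restrict A) + ν.restrict A + ν.restrict Aᶜ := by rw [hpos, hneg]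
    _ = (μ.restrict A - ν.restrict A) + ν := by
        rw [add_assoc, Measure.restrict_add_restrict_compl hA]

lemma bind_restrict_sub_restrict_eq_self (hP : Measurable P) [∀ s, IsProbabilityMeasure (P s)]
    (hμ : μ.bind P = μ) (hν : ν.bind P = ν) :
    (μ.restrict A - ν.restrict A).bind P = μ.restrict A - ν.restrict A := by
  set ρ := μ.restrict A - ν.restrict A
  set ρ' := ν.restrict Aᶜ - μ.restrict Aᶜ
  have hbind : μ + ρ'.bind P = ρ.bind P + ν := by
    simpa only [Measure.bind_add hP, hμ, hν] using
      congrArg (Measure.bind · P) (add_restrict_compl_sub_eq hA hνμ hμν)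
  -- Restrict `hbind` to `A` and drop `ρ'P`; mass conservation upgrades `ρ ≤ ρP` to equality.
  refine bind_eq_self_of_le_bind hP ?_
  have : ν.restrict A + ρ ≤ ν.restrict A + (ρ.bind P).restrict A :=
    calc ν.restrict A + ρ = μ.restrict A := by rw [add_comm, Measure.sub_add_cancel_of_le hνμ]
      _ ≤ μ.restrict A + (ρ'.bind P).restrict A := Measure.le_add_right le_rfl
      _ = ν.restrict A + (ρ.bind P).restrict A := by
        rw [← Measure.restrict_add, hbind, Measure.restrict_add, add_comm]
  exact (Measure.le_of_add_le_add_left this).trans Measure.restrict_le_self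

end Hahn

section Topology

variable [TopologicalSpace S]

lemma IsStrongFeller.continuous_measureReal (hSF : IsStrongFeller P) {B : Set S}
    (hB : MeasurableSet B) : Continuous fun s => (P s).real B := by
  have hbdd : ∀ x, |B.indicator (1 : S → ℝ) x| ≤ 1 := fun x => by
    by_cases hx : x ∈ B <;> simp [hx]
  simpa [integral_indicator_one hB] using
    hSF (B.indicator 1) (measurable_one.indicator hB) ⟨1, hbdd⟩

lemma IsStrongFeller.isOpen_setOf_ne_zero [∀ s, IsFiniteMeasure (P s)] (hSF : IsStrongFeller P)
    {B : Set S} (hB : MeasurableSet B) : IsOpen {s | P s B ≠ 0} := by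
  have : {s | P s B ≠ 0} = {s | (P s).real B ≠ 0} := by
    ext s
    simp [measureReal_eq_zero_iff]
  rw [this]
  exact isOpen_ne_fun (hSF.continuous_measureReal hB) continuous_const

lemma forall_measure_eq_zero_of_bind_eq_self [OpensMeasurableSpace S]
    [∀ s, IsFiniteMeasure (P s)] (hP : Measurable P) (hSF : IsStrongFeller P)
    (hirr : IsTopologicallyIrreducible P) {ρ : Measure S} (hρ : ρ.bind P = ρ) (hρ0 : ρ ≠ 0)
    {B : Set S} (hB : MeasurableSet B) (hB0 : ρ B = 0) (s : S) : P s B = 0 := by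
  by_contra hs
  have hO := hSF.isOpen_setOf_ne_zero hB
  have hreach : ∀ t, ∃ n, kernelIter P n t {s | P s B ≠ 0} ≠ 0 := fun t =>
    (hirr t _ hO ⟨s, hs⟩).imp fun _ hn => hn.2.ne'
  exact measure_ne_zero_of_bind_eq_self hP hρ hρ0 hO.measurableSet hreach
    (ae_iff.1 (ae_eq_zero_of_bind_eq_self hP hρ hB hB0))

end Topology

end

theorem stmt_14_general
    {S : Type*} [MetricSpace S] [MeasurableSpace S] [BorelSpace S]
    (P : S → Measure S) (hP : Measurable P) [∀ s, IsProbabilityMeasure (P s)]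
    (hSF : ∀ f : S → ℝ, Measurable f → (∃ M, ∀ x, |f x| ≤ M) →
      Continuous fun s => ∫ x, f x ∂(P s))
    (hirr : ∀ s : S, ∀ O : Set S, IsOpen O → O.Nonempty →
      ∃ n : ℕ, 1 ≤ n ∧ 0 < kernelIter P n s O)
    (μ₁ μ₂ : Measure S) [IsProbabilityMeasure μ₁] [IsProbabilityMeasure μ₂]
    (hμ₁ : ∀ A : Set S, MeasurableSet A → μ₁ A = ∫⁻ s, P s A ∂μ₁)
    (hμ₂ : ∀ A : Set S, MeasurableSet A → μ₂ A = ∫⁻ s, P s A ∂μ₂) :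
    μ₁ = μ₂ := by
  have hinv₁ := bind_eq_self_of_forall_eq_lintegral hP hμ₁
  have hinv₂ := bind_eq_self_of_forall_eq_lintegral hP hμ₂
  obtain ⟨A, hA, hA₁, hA₂⟩ := hahn_decomposition μ₁ μ₂
  have h₂₁ := restrict_le_restrict_of_forall_subset hA hA₁
  have h₁₂ := restrict_le_restrict_of_forall_subset hA.compl hA₂
  set ρ₁ := μ₁.restrict A - μ₂.restrict A
  set ρ₂ := μ₂.restrict Aᶜ - μ₁.restrict Aᶜ
  have hdec : μ₁ + ρ₂ = ρ₁ + μ₂ := add_restrict_compl_sub_eq hA h₂₁ h₁₂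
  have hmass : ρ₂ univ = ρ₁ univ := by
    simpa [add_comm] using congrArg (· univ) hdec
  rcases eq_or_ne ρ₁ 0 with h0 | hρ₁0
  · have hρ₂ : ρ₂ = 0 := by
      rw [← Measure.measure_univ_eq_zero, hmass, h0, Measure.coe_zero, Pi.zero_apply]
    simpa [h0, hρ₂] using hdec
  have hρ₂0 : ρ₂ ≠ 0 := by
    rwa [Ne, ← Measure.measure_univ_eq_zero, hmass, Measure.measure_univ_eq_zero]
  have hAc (s : S) : P s Aᶜ = 0 :=
    forall_measure_eq_zero_of_bind_eq_self hP hSF hirr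
      (bind_restrict_sub_restrict_eq_self hA h₂₁ h₁₂ hP hinv₁ hinv₂) hρ₁0 hA.compl
      (restrict_sub_restrict_apply_of_disjoint _ _ hA disjoint_compl_right) s
  have hA0 (s : S) : P s A = 0 :=
    forall_measure_eq_zero_of_bind_eq_self hP hSF hirr
      (bind_restrict_sub_restrict_eq_self hA.compl h₁₂ (by rwa [compl_compl]) hP hinv₂ hinv₁)
      hρ₂0 hA
      (restrict_sub_restrict_apply_of_disjoint _ _ hA.compl disjoint_compl_left) s
  obtain ⟨s⟩ := nonempty_of_isProbabilityMeasure μ₁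
  simpa [hA0 s, hAc s] using prob_add_prob_compl (μ := P s) hA

/-- on a compact metric space, if a strong Feller Markov kernel `P` is
topologically irreducible (for every state `s` and nonempty open set `O` there is `n ≥ 1`
with `P^n(s, O) > 0`), then any two invariant probability measures coincide. -/
theorem stmt_14
    {S : Type*} [MetricSpace S] [CompactSpace S] [MeasurableSpace S] [BorelSpace S]
    (P : S → Measure S) (hP : Measurable P) [∀ s, IsProbabilityMeasure (P s)]
    (hSF : ∀ f : S → ℝ, Measurable f → (∃ M, ∀ x, |f x| ≤ M) →
      Continuous fun s => ∫ x, f x ∂(P s))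
    (hirr : ∀ s : S, ∀ O : Set S, IsOpen O → O.Nonempty →
      ∃ n : ℕ, 1 ≤ n ∧ 0 < kernelIter P n s O)
    (μ₁ μ₂ : Measure S) [IsProbabilityMeasure μ₁] [IsProbabilityMeasure μ₂]
    (hμ₁ : ∀ A : Set S, MeasurableSet A → μ₁ A = ∫⁻ s, P s A ∂μ₁)
    (hμ₂ : ∀ A : Set S, MeasurableSet A → μ₂ A = ∫⁻ s, P s A ∂μ₂) :
    μ₁ = μ₂ :=
  stmt_14_general P hP hSF hirr μ₁ μ₂ hμ₁ hμ₂
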